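/- arXiv:2508.00431 — 3 statements merged into one kernel-verified Lean document; each statement's English description precedes it below -/
import Mathlib

section
/- Let A be an AUF algebra and e ∈ A a generating idempotent, so that eAe = {x ∈ A : exe = x} is a unital finite-dimensional ℂ-algebra with unit e. Let n ≥ 1, let p ∈ M_n(eAe) be a generating idempotent of the unital finite-dimensional algebra M_n(eAe), and set B = p M_n(eAe) p. For ψ ∈ SLF(A), let Θ(ψ) ∈ SLF(B) be defined by Θ(ψ)(b) = Σ_{k=1}^n ψ(b_{kk}). Then ψ is non-degenerate on A if and only if Θ(ψ) is non-degenerate on B. -/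
open scoped BigOperators

universe u v

section BasicDefs

variable (R : Type u)

section MulOnly
variable [NonUnitalRing R]

/-- An idempotent element. -/
def IsIdem (e : R) : Prop := e * e = e

/-- Two idempotents are orthogonal. -/
def OrthIdem (e f : R) : Prop := e * f = 0 ∧ f * e = 0

/-- `f ≤ e` for idempotents: `f * e = f` and `e * f = f`. -/
def SubIdem (f e : R) : Prop := f * e = f ∧ e * f = f

/-- A primitive idempotent. -/
def IsPrimIdem (e : R) : Prop :=
  IsIdem R e ∧ e ≠ 0 ∧ ∀ f : R, IsIdem R f → SubIdem R f e → f = 0 ∨ f = e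

/-- Equivalence of idempotents: partial isometries `u ∈ eRf`, `v ∈ fRe` with
`u * v = e`, `v * u = f`. -/
def IdemEquiv (e f : R) : Prop :=
  ∃ u v : R, e * u * f = u ∧ f * v * e = v ∧ u * v = e ∧ v * u = f

/-- A generating idempotent: it has a finite orthogonal primitive decomposition
    such that every primitive idempotent is equivalent to a member of it. -/
def IsGenIdem (e : R) : Prop :=
  IsIdem R e ∧ ∃ (n : ℕ) (ε : Fin n → R),
    (∀ k, IsPrimIdem R (ε k)) ∧ (∀ k l, k ≠ l → OrthIdem R (ε k) (ε l)) ∧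
    e = ∑ k, ε k ∧ ∀ p : R, IsPrimIdem R p → ∃ k, IdemEquiv R p (ε k)

/-- An idempotent of the corner algebra `fRf`. -/
def IsIdemIn (f e : R) : Prop := IsIdem R e ∧ f * e * f = e

/-- A primitive idempotent of the corner algebra `fRf`. -/
def IsPrimIdemIn (f e : R) : Prop :=
  IsIdemIn R f e ∧ e ≠ 0 ∧ ∀ g : R, IsIdemIn R f g → SubIdem R g e → g = 0 ∨ g = e

/-- Equivalence of idempotents within the corner algebra `fRf`. -/
def IdemEquivIn (f p q : R) : Prop :=
  ∃ u v : R, f * u * f = u ∧ f * v * f = v ∧ p * u * q = u ∧ q * v * p = v ∧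
    u * v = p ∧ v * u = q

/-- A generating idempotent of the corner algebra `fRf`. -/
def IsGenIdemIn (f e : R) : Prop :=
  IsIdemIn R f e ∧ ∃ (n : ℕ) (ε : Fin n → R),
    (∀ k, IsPrimIdemIn R f (ε k)) ∧ (∀ k l, k ≠ l → OrthIdem R (ε k) (ε l)) ∧
    e = ∑ k, ε k ∧ ∀ p : R, IsPrimIdemIn R f p → ∃ k, IdemEquivIn R f p (ε k)

end MulOnly

section Subspaces
variable [NonUnitalRing R] [Module ℂ R] [SMulCommClass ℂ R R] [IsScalarTower ℂ R R]

/-- The subspace `Re = {x | x * e = x}`. -/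
def subAe (e : R) : Submodule ℂ R where
  carrier := {x | x * e = x}
  add_mem' := by
    intro a b ha hb
    simp only [Set.mem_setOf_eq] at *
    rw [add_mul, ha, hb]
  zero_mem' := by simp
  smul_mem' := by
    intro c x hx
    simp only [Set.mem_setOf_eq] at *
    rw [smul_mul_assoc, hx]

/-- The corner subspace `eRf = {x | e * x * f = x}`. -/
def subCorner (e f : R) : Submodule ℂ R where
  carrier := {x | e * x * f = x}
  add_mem' := by
    intro a b ha hb
    simp only [Set.mem_setOf_eq] at *
    rw [mul_add, add_mul, ha, hb]
  zero_mem' := by simp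
  smul_mem' := by
    intro c x hx
    simp only [Set.mem_setOf_eq] at *
    rw [mul_smul_comm, smul_mul_assoc, hx]

/-- A symmetric linear functional. -/
def IsSLF (ψ : R →ₗ[ℂ] ℂ) : Prop := ∀ x y : R, ψ (x * y) = ψ (y * x)

/-- Witness data for an AUF algebra: a family of pairwise orthogonal idempotents with
finite-dimensional corners spanning the algebra. -/
def IsAUFWitness {I : Type v} (E : I → R) : Prop :=
  (∀ i, IsIdem R (E i)) ∧ (∀ i j, i ≠ j → OrthIdem R (E i) (E j)) ∧
  (∀ i j, FiniteDimensional ℂ (subCorner R (E i) (E j))) ∧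
  (⨆ i, ⨆ j, subCorner R (E i) (E j)) = ⊤

/-- An almost unital and finite-dimensional (AUF) algebra. -/
def IsAUF : Prop := ∃ (I : Type u) (E : I → R), IsAUFWitness R E

end Subspaces

end BasicDefs

section Stmt15

variable {A : Type u} [NonUnitalRing A] [Module ℂ A] [SMulCommClass ℂ A A] [IsScalarTower ℂ A A]

/-- The map `Θ(ψ)(b) = Σ_k ψ(b_{kk})` on the corner `B = p M_n(eAe) p`. -/
noncomputable def Theta {n : ℕ} (p : Matrix (Fin n) (Fin n) A) (ψ : A →ₗ[ℂ] ℂ) :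
    ↥(subCorner (Matrix (Fin n) (Fin n) A) p p) →ₗ[ℂ] ℂ where
  toFun b := ∑ k, ψ (b.1 k k)
  map_add' x y := by
    simp only [Submodule.coe_add, Matrix.add_apply, map_add, Finset.sum_add_distrib]
  map_smul' c x := by
    simp only [SetLike.val_smul, Matrix.smul_apply, map_smul, RingHom.id_apply,
      smul_eq_mul, Finset.mul_sum]

end Stmt15

section Aux

variable {S : Type u} [NonUnitalRing S] [Module ℂ S] [SMulCommClass ℂ S S] [IsScalarTower ℂ S S]

lemma list_sum_mul_zero {l : List S} {c : S} (h : ∀ a ∈ l, a * c = 0) : l.sum * c = 0 := by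
  induction l with
  | nil => simp
  | cons a t ih =>
      rw [List.sum_cons, add_mul, h a (by simp), ih (fun b hb => h b (List.mem_cons_of_mem _ hb)),
        add_zero]

lemma mul_list_sum_zero {l : List S} {c : S} (h : ∀ a ∈ l, c * a = 0) : c * l.sum = 0 := by
  induction l with
  | nil => simp
  | cons a t ih =>
      rw [List.sum_cons, mul_add, h a (by simp), ih (fun b hb => h b (List.mem_cons_of_mem _ hb)),
        add_zero]

lemma isPrimIdem_of_isPrimIdemIn {f π : S} (hf : IsIdem S f) (h : IsPrimIdemIn S f π) :
    IsPrimIdem S π := by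
  obtain ⟨⟨hπ, hfπ⟩, hπ0, hmin⟩ := h
  have hπf : π * f = π := by
    conv_lhs => rw [← hfπ]
    rw [mul_assoc, mul_assoc, hf, ← mul_assoc, hfπ]
  have hfπ' : f * π = π := by
    conv_lhs => rw [← hfπ]
    rw [← mul_assoc, ← mul_assoc, hf, hfπ]
  refine ⟨hπ, hπ0, fun g hgidem hsub => ?_⟩
  refine hmin g ⟨hgidem, ?_⟩ hsub
  have hgf : g * f = g := by rw [← hsub.1, mul_assoc, hπf]
  have hfg : f * g = g := by rw [← hsub.2, ← mul_assoc, hfπ']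
  rw [hfg, hgf]

/-- Decomposition of an idempotent of the corner `fSf` into primitive idempotents of `fSf`. -/
lemma decomposeIn (f : S) :
    ∀ (N : ℕ) (g : S), Module.finrank ℂ (subCorner S g g) ≤ N → IsIdem S g →
      f * g * f = g → g ≠ 0 → FiniteDimensional ℂ (subCorner S g g) →
      ∃ l : List S, (∀ π ∈ l, IsPrimIdemIn S f π) ∧ g = l.sum := by
  intro N
  induction N with
  | zero =>
      intro g hrank hg hfg hg0 hfd
      exfalso
      have hmem : g ∈ subCorner S g g := by
        show g * g * g = g
        rw [hg, hg]
      have hnt : Nontrivial ↥(subCorner S g g) :=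
        ⟨⟨⟨g, hmem⟩, 0, fun hEq => hg0 (by simpa [Subtype.ext_iff] using hEq)⟩⟩
      have := Module.finrank_pos (R := ℂ) (M := ↥(subCorner S g g))
      omega
  | succ N ih =>
      intro g hrank hg hfg hg0 hfd
      by_cases hprim : IsPrimIdemIn S f g
      · exact ⟨[g], by simpa using hprim, by simp⟩
      rw [IsPrimIdemIn] at hprim
      push_neg at hprim
      obtain ⟨g', ⟨hg'idem, hfg'⟩, ⟨hg'g, hgg'⟩, hg'0, hg'ne⟩ := hprim ⟨hg, hfg⟩ hg0
      set h : S := g - g' with hh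
      have hhidem : IsIdem S h := by
        show (g - g') * (g - g') = g - g'
        rw [sub_mul, mul_sub, mul_sub, hg, hgg', hg'g, hg'idem, sub_self, sub_zero]
      have hfh : f * h * f = h := by
        show f * (g - g') * f = g - g'
        rw [mul_sub, sub_mul, hfg, hfg']
      have hh0 : h ≠ 0 := sub_ne_zero.mpr fun hgg => hg'ne hgg.symm
      have hgh : g * h = h := by
        show g * (g - g') = g - g'
        rw [mul_sub, hg, hgg']
      have hhg : h * g = h := by
        show (g - g') * g = g - g'
        rw [sub_mul, hg, hg'g]
      have hle : ∀ k : S, IsIdem S k → k * g = k → g * k = k →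
          subCorner S k k ≤ subCorner S g g := by
        intro k hk hkg hgk z hz
        have hz' : k * z * k = z := hz
        show g * z * g = z
        conv_lhs => rw [← hz']
        simp only [← mul_assoc]
        rw [hgk, mul_assoc, hkg]
        exact hz'
      have hglt : ∀ k : S, IsIdem S k → k * g = k → g * k = k → k ≠ g →
          Module.finrank ℂ (subCorner S k k) < Module.finrank ℂ (subCorner S g g) := by
        intro k hk hkg hgk hkne
        refine Submodule.finrank_lt_finrank_of_lt (lt_of_le_of_ne (hle k hk hkg hgk) ?_)
        intro hEq
        have hmem : g ∈ subCorner S g g := by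
          show g * g * g = g
          rw [hg, hg]
        rw [← hEq] at hmem
        have hmem' : k * g * k = g := hmem
        rw [hkg, hk] at hmem'
        exact hkne hmem'
      have hfd' : ∀ k : S, IsIdem S k → k * g = k → g * k = k →
          FiniteDimensional ℂ (subCorner S k k) := fun k hk hkg hgk =>
        Submodule.finiteDimensional_of_le (hle k hk hkg hgk)
      have hhne : h ≠ g := by
        intro hEq
        rw [hh] at hEq
        exact hg'0 (sub_eq_self.mp hEq)
      obtain ⟨l₁, hl₁, hl₁sum⟩ := ih g'
        (by have := hglt g' hg'idem hg'g hgg' hg'ne; omega) hg'idem hfg' hg'0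
        (hfd' g' hg'idem hg'g hgg')
      obtain ⟨l₂, hl₂, hl₂sum⟩ := ih h
        (by have := hglt h hhidem hhg hgh hhne; omega) hhidem hfh hh0
        (hfd' h hhidem hhg hgh)
      refine ⟨l₁ ++ l₂, ?_, ?_⟩
      · intro π hπ
        rcases List.mem_append.mp hπ with h1 | h2
        · exact hl₁ π h1
        · exact hl₂ π h2
      · rw [List.sum_append, ← hl₁sum, ← hl₂sum, hh]
        abel

lemma sum_orth_absorb {m : ℕ} {ε : Fin m → S} (hεi : ∀ k, IsIdem S (ε k))
    (hεo : ∀ k l, k ≠ l → OrthIdem S (ε k) (ε l)) (k : Fin m) :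
    (∑ j, ε j) * ε k = ε k ∧ ε k * ∑ j, ε j = ε k := by
  constructor
  · rw [Finset.sum_mul, Finset.sum_eq_single k (fun j _ hj => (hεo j k hj).1)
      (fun hk => (hk (Finset.mem_univ k)).elim)]
    exact hεi k
  · rw [Finset.mul_sum, Finset.sum_eq_single k (fun j _ hj => (hεo k j (Ne.symm hj)).1)
      (fun hk => (hk (Finset.mem_univ k)).elim)]
    exact hεi k

/-- Key transfer lemma. -/
lemma keyLemma (f₁ f₂ q : S) (hf₁ : IsIdem S f₁) (hf₂ : IsIdem S f₂)
    {m : ℕ} {ε : Fin m → S} (hεi : ∀ k, IsIdem S (ε k))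
    (hεo : ∀ k l, k ≠ l → OrthIdem S (ε k) (ε l)) (hq : q = ∑ j, ε j)
    (cover₁ : ∀ π, IsPrimIdemIn S f₁ π → ∃ k, IdemEquiv S π (ε k))
    (cover₂ : ∀ π, IsPrimIdemIn S f₂ π → ∃ k, IdemEquiv S π (ε k))
    (P : S → Prop) (hPl : ∀ r z, P z → P (r * z)) (hPr : ∀ r z, P z → P (z * r))
    (x : S) (hx : P x) (hx1 : f₁ * x * f₂ = x) (hx0 : x ≠ 0)
    (hfd₁ : FiniteDimensional ℂ (subCorner S f₁ f₁))
    (hfd₂ : FiniteDimensional ℂ (subCorner S f₂ f₂)) :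
    ∃ b : S, P b ∧ q * b * q = b ∧ b ≠ 0 := by
  have hf₁0 : f₁ ≠ 0 := by
    intro h; apply hx0; rw [← hx1, h, zero_mul, zero_mul]
  have hf₂0 : f₂ ≠ 0 := by
    intro h; apply hx0; rw [← hx1, h, mul_zero]
  obtain ⟨l₁, hl₁, hl₁sum⟩ := decomposeIn f₁ (Module.finrank ℂ (subCorner S f₁ f₁)) f₁ le_rfl
    hf₁ (by rw [hf₁, hf₁]) hf₁0 hfd₁
  obtain ⟨l₂, hl₂, hl₂sum⟩ := decomposeIn f₂ (Module.finrank ℂ (subCorner S f₂ f₂)) f₂ le_rfl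
    hf₂ (by rw [hf₂, hf₂]) hf₂0 hfd₂
  have hex : ∃ π ∈ l₁, ∃ ρ ∈ l₂, π * x * ρ ≠ 0 := by
    by_contra hall
    push_neg at hall
    apply hx0
    conv_lhs => rw [← hx1, hl₁sum, hl₂sum]
    rw [mul_assoc]
    refine list_sum_mul_zero fun π hπ => ?_
    rw [← mul_assoc]
    exact mul_list_sum_zero fun ρ hρ => hall π hπ ρ hρ
  obtain ⟨π, hπl, ρ, hρl, ha0⟩ := hex
  set a : S := π * x * ρ with hadef
  have hπ := hl₁ π hπl
  have hρ := hl₂ ρ hρl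
  have hπi : π * π = π := hπ.1.1
  have hρi : ρ * ρ = ρ := hρ.1.1
  have hπa : π * a = a := by
    rw [hadef]; simp only [← mul_assoc]; rw [hπi]
  have haρ : a * ρ = a := by
    rw [hadef, mul_assoc, mul_assoc, hρi, ← mul_assoc]
  obtain ⟨k, u, v, h1, h2, h3, h4⟩ := cover₁ π hπ
  obtain ⟨l, u', v', g1, g2, g3, g4⟩ := cover₂ ρ hρ
  set b : S := v * a * u' with hbdef
  have hPb : P b := hPr u' _ (hPl v _ (hPr ρ _ (hPl π _ hx)))
  have hub : u * b * v' = a := by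
    rw [hbdef]
    simp only [← mul_assoc]
    rw [h3, hπa, mul_assoc, g3, haρ]
  have hb0 : b ≠ 0 := fun hEq => ha0 (by rw [← hub, hEq, mul_zero, zero_mul])
  have hεv : ε k * v = v := by
    conv_lhs => rw [← h2]
    simp only [← mul_assoc]
    rw [hεi k, h2]
  have hu'ε : u' * ε l = u' := by
    conv_lhs => rw [← g1]
    rw [mul_assoc, hεi l, g1]
  have hεb : ε k * b = b := by
    rw [hbdef]
    simp only [← mul_assoc]
    rw [hεv]
  have hbε : b * ε l = b := by
    rw [hbdef, mul_assoc, hu'ε]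
  have habs1 := (sum_orth_absorb hεi hεo k).1
  have habs2 := (sum_orth_absorb hεi hεo l).2
  have hqb : q * b = b := by
    conv_lhs => rw [← hεb]
    rw [← mul_assoc, hq, habs1, hεb]
  have hbq : b * q = b := by
    conv_lhs => rw [← hbε]
    rw [mul_assoc, hq, habs2, hbε]
  exact ⟨b, hPb, by rw [hqb, hbq], hb0⟩

/-- An element of an AUF algebra is a finite sum of its corner components. -/
lemma corner_repr {I : Type v} {E : I → S} (hW : IsAUFWitness S E) (x : S) :
    ∃ s : Finset (I × I), x = ∑ q ∈ s, E q.1 * (x * E q.2) := by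
  classical
  obtain ⟨hidem, horth, hfd, htop⟩ := hW
  have hxt : x ∈ (⨆ q : I × I, subCorner S (E q.1) (E q.2)) := by
    have hle : (⨆ i, ⨆ j, subCorner S (E i) (E j)) ≤
        ⨆ q : I × I, subCorner S (E q.1) (E q.2) :=
      iSup_le fun i => iSup_le fun j =>
        le_iSup (fun q : I × I => subCorner S (E q.1) (E q.2)) (i, j)
    exact hle (by rw [htop]; exact Submodule.mem_top)
  rw [Submodule.mem_iSup_iff_exists_finset] at hxt
  obtain ⟨s, hs⟩ := hxt
  refine ⟨s, ?_⟩
  set T : S →ₗ[ℂ] S := (LinearMap.id : S →ₗ[ℂ] S) -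
    ∑ q ∈ s, (LinearMap.mulLeft ℂ (E q.1)) ∘ₗ (LinearMap.mulRight ℂ (E q.2)) with hT
  have hker : (⨆ q ∈ s, subCorner S (E q.1) (E q.2)) ≤ LinearMap.ker T := by
    refine iSup_le fun q => iSup_le fun hq => fun y hy => ?_
    have hy' : E q.1 * y * E q.2 = y := hy
    have hterm : ∀ q' ∈ s,
        ((LinearMap.mulLeft ℂ (E q'.1)) ∘ₗ (LinearMap.mulRight ℂ (E q'.2))) y
          = if q' = q then y else 0 := by
      intro q' _
      simp only [LinearMap.comp_apply, LinearMap.mulRight_apply, LinearMap.mulLeft_apply]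
      by_cases hqq : q' = q
      · subst hqq
        rw [if_pos rfl, ← mul_assoc]
        exact hy'
      · rw [if_neg hqq]
        have hne : q'.1 ≠ q.1 ∨ q'.2 ≠ q.2 := by
          by_contra hcon
          push_neg at hcon
          exact hqq (Prod.ext hcon.1 hcon.2)
        conv_lhs => rw [← hy']
        rcases hne with hcase | hcase
        · have horth' := (horth q'.1 q.1 hcase).1
          simp only [← mul_assoc]
          rw [horth', zero_mul, zero_mul, zero_mul]
        · have horth' := (horth q.2 q'.2 (Ne.symm hcase)).1
          simp only [← mul_assoc]
          rw [mul_assoc _ (E q.2) (E q'.2), horth', mul_zero]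
    show T y = 0
    rw [hT]
    simp only [LinearMap.sub_apply, LinearMap.id_apply, LinearMap.sum_apply]
    rw [Finset.sum_congr rfl hterm, Finset.sum_ite_eq' s q (fun _ => y), if_pos hq, sub_self]
  have hTx : T x = 0 := hker hs
  rw [hT] at hTx
  simp only [LinearMap.sub_apply, LinearMap.id_apply, LinearMap.sum_apply,
    LinearMap.comp_apply, LinearMap.mulRight_apply, LinearMap.mulLeft_apply] at hTx
  have := sub_eq_zero.mp hTx
  exact this

/-- Detection: a nonzero element has a nonzero corner component. -/
lemma exists_corner_ne_zero {I : Type v} {E : I → S} (hW : IsAUFWitness S E) {x : S}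
    (hx : x ≠ 0) : ∃ i j, E i * x * E j ≠ 0 := by
  by_contra hall
  push_neg at hall
  obtain ⟨s, hs⟩ := corner_repr hW x
  apply hx
  rw [hs]
  refine Finset.sum_eq_zero fun q _ => ?_
  rw [← mul_assoc]
  exact hall q.1 q.2

/-- Any corner `eSe` of an AUF algebra is finite-dimensional. -/
lemma corner_fd {I : Type v} {E : I → S} (hW : IsAUFWitness S E) (e : S) :
    FiniteDimensional ℂ (subCorner S e e) := by
  obtain ⟨s, he⟩ := corner_repr hW e
  obtain ⟨hidem, horth, hfd, htop⟩ := hW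
  set y : I × I → S := fun q => E q.1 * (e * E q.2) with hy
  haveI : ∀ z : (I × I) × (I × I), FiniteDimensional ℂ (subCorner S (E z.1.1) (E z.2.2)) :=
    fun z => hfd _ _
  set N : Submodule ℂ S := (s ×ˢ s).sup (fun z : (I × I) × (I × I) =>
    subCorner S (E z.1.1) (E z.2.2)) with hN
  haveI : FiniteDimensional ℂ N := by
    rw [hN]
    exact Submodule.finiteDimensional_finset_sup _ _
  refine Submodule.finiteDimensional_of_le (?_ : subCorner S e e ≤ N)
  intro w hw
  have hw' : e * w * e = w := hw
  have hy1 : ∀ q : I × I, E q.1 * y q = y q := by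
    intro q
    rw [hy]
    simp only [← mul_assoc]
    rw [hidem q.1]
  have hy2 : ∀ q : I × I, y q * E q.2 = y q := by
    intro q
    rw [hy]
    simp only [← mul_assoc]
    rw [mul_assoc _ (E q.2) (E q.2), hidem q.2]
  have hrepr : w = ∑ q ∈ s, ∑ q' ∈ s, y q * w * y q' := by
    have step : e * w * e = ∑ q ∈ s, ∑ q' ∈ s, y q * w * y q' := by
      rw [he, Finset.sum_mul, Finset.sum_mul]
      exact Finset.sum_congr rfl fun q _ => by rw [Finset.mul_sum]
    conv_lhs => rw [← hw']
    exact step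
  rw [hrepr]
  refine Submodule.sum_mem _ fun q hq => Submodule.sum_mem _ fun q' hq' => ?_
  have hmem : y q * w * y q' ∈ subCorner S (E q.1) (E q'.2) := by
    show E q.1 * (y q * w * y q') * E q'.2 = y q * w * y q'
    simp only [← mul_assoc]
    rw [hy1 q, mul_assoc _ (y q') (E q'.2), hy2 q']
  have hle' : subCorner S (E q.1) (E q'.2) ≤ N := by
    rw [hN]
    have hmemprod : (q, q') ∈ s ×ˢ s := Finset.mem_product.mpr ⟨hq, hq'⟩
    exact Finset.le_sup (f := fun z : (I × I) × (I × I) => subCorner S (E z.1.1) (E z.2.2))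
      hmemprod
  exact hle' hmem

end Aux

section MatrixAux

variable {A : Type u} [NonUnitalRing A] [Module ℂ A] [SMulCommClass ℂ A A] [IsScalarTower ℂ A A]

lemma matrix_corner_fd (n : ℕ) (e : A) (hfd : FiniteDimensional ℂ (subCorner A e e)) :
    FiniteDimensional ℂ (subCorner (Matrix (Fin n) (Fin n) A)
      (Matrix.diagonal fun _ => e) (Matrix.diagonal fun _ => e)) := by
  set f : Matrix (Fin n) (Fin n) A := Matrix.diagonal fun _ => e with hf
  have hentry : ∀ (M : Matrix (Fin n) (Fin n) A), f * M * f = M →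
      ∀ k l, e * M k l * e = M k l := by
    intro M hM k l
    conv_rhs => rw [← hM]
    rw [hf, Matrix.mul_diagonal, Matrix.diagonal_mul]
  let Φ : ↥(subCorner (Matrix (Fin n) (Fin n) A) f f) →ₗ[ℂ]
      (Fin n → Fin n → ↥(subCorner A e e)) :=
    { toFun := fun M => fun k l => ⟨M.1 k l, hentry M.1 M.2 k l⟩
      map_add' := fun x y => by
        funext k l
        exact Subtype.ext rfl
      map_smul' := fun c x => by
        funext k l
        exact Subtype.ext rfl }
  have hinj : Function.Injective Φ := by
    intro x y hxy
    exact Subtype.ext (Matrix.ext fun k l =>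
      congrArg Subtype.val (congrFun (congrFun hxy k) l))
  exact FiniteDimensional.of_injective Φ hinj

variable {ψ : A →ₗ[ℂ] ℂ} {n : ℕ}

lemma psi_trace_comm (hψ : IsSLF A ψ) (X Y : Matrix (Fin n) (Fin n) A) :
    ∑ k, ψ ((X * Y) k k) = ∑ k, ψ ((Y * X) k k) := by
  have h1 : ∀ U V : Matrix (Fin n) (Fin n) A,
      ∑ k, ψ ((U * V) k k) = ∑ k, ∑ j, ψ (U k j * V j k) := by
    intro U V
    refine Finset.sum_congr rfl fun k _ => ?_
    rw [Matrix.mul_apply, map_sum]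
  rw [h1, h1]
  rw [show (∑ k, ∑ j, ψ (X k j * Y j k)) = ∑ k, ∑ j, ψ (Y j k * X k j) from
    Finset.sum_congr rfl fun _ _ => Finset.sum_congr rfl fun _ _ => hψ _ _]
  exact Finset.sum_comm

lemma trace_mul_std (b : Matrix (Fin n) (Fin n) A) (i j : Fin n) (y : A) :
    ∑ k, ψ ((b * Matrix.single i j y) k k) = ψ (b j i * y) := by
  have hdiag : ∀ k, (b * Matrix.single i j y) k k
      = if j = k then b k i * y else 0 := by
    intro k
    rw [Matrix.mul_apply]
    have hterm : ∀ m, b k m * Matrix.single i j y m k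
        = if i = m then (if j = k then b k m * y else 0) else 0 := by
      intro m
      by_cases h1 : i = m <;> by_cases h2 : j = k <;>
        simp [Matrix.single, h1, h2]
    rw [Finset.sum_congr rfl fun m _ => hterm m, Finset.sum_ite_eq]
    simp
  rw [Finset.sum_congr rfl fun k _ => congrArg ψ (hdiag k)]
  simp only [apply_ite ψ, map_zero]
  rw [Finset.sum_ite_eq]
  simp

lemma trace_std_mul (c : Matrix (Fin n) (Fin n) A) (i j : Fin n) (y : A) :
    ∑ k, ψ ((Matrix.single i j y * c) k k) = ψ (y * c j i) := by
  have hdiag : ∀ k, (Matrix.single i j y * c) k k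
      = if i = k then y * c j k else 0 := by
    intro k
    rw [Matrix.mul_apply]
    have hterm : ∀ m, Matrix.single i j y k m * c m k
        = if j = m then (if i = k then y * c m k else 0) else 0 := by
      intro m
      by_cases h1 : i = k <;> by_cases h2 : j = m <;>
        simp [Matrix.single, h1, h2]
    rw [Finset.sum_congr rfl fun m _ => hterm m, Finset.sum_ite_eq]
    simp
  rw [Finset.sum_congr rfl fun k _ => congrArg ψ (hdiag k)]
  simp only [apply_ite ψ, map_zero]
  rw [Finset.sum_ite_eq]
  simp

end MatrixAux

/-- In the setting of Statement 15, a symmetric linear functional `ψ` on `A` is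
non-degenerate iff the symmetric linear functional `Θ(ψ)` on `B = p M_n(eAe) p` is
non-degenerate. -/
theorem stmt_16 {A : Type u} [NonUnitalRing A] [Module ℂ A] [SMulCommClass ℂ A A]
    [IsScalarTower ℂ A A] (hA : IsAUF A) (e : A) (hgen : IsGenIdem A e)
    (n : ℕ) (hn : 1 ≤ n) (p : Matrix (Fin n) (Fin n) A)
    (hp : IsGenIdemIn (Matrix (Fin n) (Fin n) A) (Matrix.diagonal fun _ => e) p)
    (ψ : A →ₗ[ℂ] ℂ) (hψ : IsSLF A ψ) :
    (∀ x : A, (∀ y : A, ψ (x * y) = 0) → x = 0) ↔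
    (∀ (b : Matrix (Fin n) (Fin n) A) (hb : b ∈ subCorner (Matrix (Fin n) (Fin n) A) p p),
      (∀ (c : Matrix (Fin n) (Fin n) A) (hc : c ∈ subCorner (Matrix (Fin n) (Fin n) A) p p)
        (hbc : b * c ∈ subCorner (Matrix (Fin n) (Fin n) A) p p),
        Theta p ψ ⟨b * c, hbc⟩ = 0) → b = 0) := by
  classical
  set f : Matrix (Fin n) (Fin n) A := Matrix.diagonal fun _ => e with hfdef
  obtain ⟨hpIn, mp, εp, hεpPrim, hεpOrth, hεpSum, hεpCover⟩ := hp
  have hppIdem : p * p = p := hpIn.1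
  constructor
  · -- ψ nondegenerate ⇒ Θ(ψ) nondegenerate
    intro hnd b hb hall
    have hpbp : p * b * p = b := hb
    have hpb : p * b = b := by
      conv_lhs => rw [← hpbp]
      simp only [← mul_assoc]
      rw [hppIdem]
      exact hpbp
    have hbp : b * p = b := by
      conv_lhs => rw [← hpbp]
      rw [mul_assoc (p * b) p p, hppIdem]
      exact hpbp
    have key : ∀ y : Matrix (Fin n) (Fin n) A, ∑ k, ψ ((b * y) k k) = 0 := by
      intro y
      have hcp : (p * y * p) * p = p * y * p := by
        rw [mul_assoc (p * y) p p, hppIdem]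
      have hpc : p * (p * y * p) = p * y * p := by
        simp only [← mul_assoc]
        rw [hppIdem]
      have hc : p * (p * y * p) * p = p * y * p := by
        rw [hpc, hcp]
      have hbc : p * (b * (p * y * p)) * p = b * (p * y * p) := by
        simp only [← mul_assoc]
        rw [hpb, mul_assoc (b * p * y) p p, hppIdem]
      have h0 := hall (p * y * p) hc hbc
      have hTh : Theta p ψ ⟨b * (p * y * p), hbc⟩ = ∑ k, ψ ((b * (p * y * p)) k k) := rfl
      have hbyp : b * (p * y * p) = (b * y) * p := by
        simp only [← mul_assoc]
        rw [hbp]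
      have e1 : (∑ k, ψ (((b * y) * p) k k)) = ∑ k, ψ ((b * y) k k) := by
        rw [psi_trace_comm hψ (b * y) p, ← mul_assoc, hpb]
      rw [← e1, ← hbyp, ← hTh]
      exact h0
    have hent : ∀ k l : Fin n, b k l = 0 := by
      intro k l
      refine hnd (b k l) fun y => ?_
      have h := key (Matrix.single l k y)
      rwa [trace_mul_std] at h
    exact Matrix.ext fun k l => (hent k l).trans rfl
  · -- Θ(ψ) nondegenerate ⇒ ψ nondegenerate
    intro hRHS x hxK
    by_contra hx0
    obtain ⟨I, E, hW⟩ := hA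
    have hPAl : ∀ r z : A, (∀ y, ψ (z * y) = 0) → ∀ y, ψ (r * z * y) = 0 := by
      intro r z hz y
      rw [mul_assoc, hψ, mul_assoc]
      exact hz (y * r)
    have hPAr : ∀ r z : A, (∀ y, ψ (z * y) = 0) → ∀ y, ψ (z * r * y) = 0 := by
      intro r z hz y
      rw [mul_assoc]
      exact hz (r * y)
    obtain ⟨i, j, hij⟩ := exists_corner_ne_zero hW hx0
    have hcornerA : FiniteDimensional ℂ (subCorner A e e) := corner_fd hW e
    obtain ⟨hEidem, hEorth, hEfd, hEtop⟩ := hW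
    obtain ⟨hgenIdem, mg, εg, hεgPrim, hεgOrth, hεgSum, hεgCover⟩ := hgen
    have hx1 : E i * (E i * x * E j) * E j = E i * x * E j := by
      simp only [← mul_assoc]
      rw [hEidem i, mul_assoc (E i * x) (E j) (E j), hEidem j]
    have hPx' : ∀ y, ψ (E i * x * E j * y) = 0 := hPAr (E j) _ (hPAl (E i) _ hxK)
    obtain ⟨a', hPa', hea', ha'0⟩ := keyLemma (E i) (E j) e (hEidem i) (hEidem j)
      (fun k => (hεgPrim k).1) hεgOrth hεgSum
      (fun π hπ => hεgCover π (isPrimIdem_of_isPrimIdemIn (hEidem i) hπ))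
      (fun π hπ => hεgCover π (isPrimIdem_of_isPrimIdemIn (hEidem j) hπ))
      (fun z => ∀ y, ψ (z * y) = 0) hPAl hPAr (E i * x * E j) hPx' hx1 hij
      (hEfd i i) (hEfd j j)
    -- move to the matrix algebra
    have hee : e * e = e := hgenIdem
    have hfidem : IsIdem (Matrix (Fin n) (Fin n) A) f := by
      show f * f = f
      rw [hfdef, Matrix.diagonal_mul_diagonal]
      exact congrArg Matrix.diagonal (funext fun _ => hee)
    set z0 : Fin n := ⟨0, hn⟩ with hz0
    set m₀ : Matrix (Fin n) (Fin n) A := Matrix.single z0 z0 a' with hm₀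
    have hPMl : ∀ r w : Matrix (Fin n) (Fin n) A,
        (∀ y : Matrix (Fin n) (Fin n) A, ∑ k, ψ ((w * y) k k) = 0) →
        ∀ y : Matrix (Fin n) (Fin n) A, ∑ k, ψ ((r * w * y) k k) = 0 := by
      intro r w hw y
      rw [mul_assoc, psi_trace_comm hψ r (w * y), mul_assoc]
      exact hw (y * r)
    have hPMr : ∀ r w : Matrix (Fin n) (Fin n) A,
        (∀ y : Matrix (Fin n) (Fin n) A, ∑ k, ψ ((w * y) k k) = 0) →
        ∀ y : Matrix (Fin n) (Fin n) A, ∑ k, ψ ((w * r * y) k k) = 0 := by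
      intro r w hw y
      rw [mul_assoc]
      exact hw (r * y)
    have hPm₀ : ∀ y : Matrix (Fin n) (Fin n) A, ∑ k, ψ ((m₀ * y) k k) = 0 := by
      intro y
      rw [hm₀, trace_std_mul]
      exact hPa' (y z0 z0)
    have hm₀f : f * m₀ * f = m₀ := by
      ext k l
      rw [hfdef, Matrix.mul_diagonal, Matrix.diagonal_mul, hm₀]
      by_cases h1 : z0 = k <;> by_cases h2 : z0 = l <;>
        simp [Matrix.single, h1, h2, hea']
    have hm₀0 : m₀ ≠ 0 := by
      intro hEq
      apply ha'0
      have h := congrFun (congrFun hEq z0) z0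
      simpa [hm₀, Matrix.single] using h
    have hfd : FiniteDimensional ℂ (subCorner (Matrix (Fin n) (Fin n) A) f f) :=
      matrix_corner_fd n e hcornerA
    obtain ⟨b, hPb, hpbp, hb0⟩ := keyLemma (S := Matrix (Fin n) (Fin n) A) f f p
      hfidem hfidem (fun k => (hεpPrim k).1.1) hεpOrth hεpSum
      (fun π hπ => by
        obtain ⟨k, u, v, _, _, c3, c4, c5, c6⟩ := hεpCover π hπ
        exact ⟨k, u, v, c3, c4, c5, c6⟩)
      (fun π hπ => by
        obtain ⟨k, u, v, _, _, c3, c4, c5, c6⟩ := hεpCover π hπ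
        exact ⟨k, u, v, c3, c4, c5, c6⟩)
      (fun w => ∀ y : Matrix (Fin n) (Fin n) A, ∑ k, ψ ((w * y) k k) = 0)
      hPMl hPMr m₀ hPm₀ hm₀f hm₀0 hfd hfd
    apply hb0
    refine hRHS b hpbp fun c hc hbc => ?_
    have hTh : Theta p ψ ⟨b * c, hbc⟩ = ∑ k, ψ ((b * c) k k) := rfl
    rw [hTh]
    exact hPb c
end

section
/- Let A be an AUF algebra, e ∈ A an idempotent, and ψ a symmetric linear functional on A. (i) If ψ is non-degenerate on A, then the restriction ψ|_{eAe} is a non-degenerate symmetric linear functional on the unital algebra eAe (i.e., if x ∈ eAe satisfies ψ(xy) = 0 for all y ∈ eAe, then x = 0). (ii) Conversely, if e is a generating idempotent of A and ψ|_{eAe} is non-degenerate on eAe, then ψ is non-degenerate on A. -/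
open scoped BigOperators

universe u v

section Aux

variable {A : Type u} [NonUnitalRing A] [Module ℂ A] [SMulCommClass ℂ A A] [IsScalarTower ℂ A A]

lemma mem_subCorner {e f x : A} : x ∈ subCorner A e f ↔ e * x * f = x := Iff.rfl

lemma list_sum_mul_zero_s17 {L : List A} {y : A} (h : ∀ p ∈ L, p * y = 0) : L.sum * y = 0 := by
  induction L with
  | nil => simp
  | cons a L ih =>
    have h1 : a * y = 0 := h a (by simp)
    have h2 : L.sum * y = 0 := ih (fun p hp => h p (by simp [hp]))
    simp [List.sum_cons, add_mul, h1, h2]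

lemma mul_list_sum_zero_s17 {L : List A} {y : A} (h : ∀ p ∈ L, y * p = 0) : y * L.sum = 0 := by
  induction L with
  | nil => simp
  | cons a L ih =>
    have h1 : y * a = 0 := h a (by simp)
    have h2 : y * L.sum = 0 := ih (fun p hp => h p (by simp [hp]))
    simp [List.sum_cons, mul_add, h1, h2]

lemma corner_le_of_subIdem {g f : A} (hg : SubIdem A g f) :
    subCorner A g g ≤ subCorner A f f := by
  intro x hx
  rw [mem_subCorner] at hx ⊢
  calc f * x * f = f * (g * x * g) * f := by rw [hx]
    _ = (f * g) * x * (g * f) := by simp only [mul_assoc]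
    _ = g * x * g := by rw [hg.1, hg.2]
    _ = x := hx

lemma self_mem_corner {f : A} (hf : IsIdem A f) : f ∈ subCorner A f f := by
  rw [mem_subCorner, hf, hf]

lemma self_notMem_sub_corner {g f : A} (hg : IsIdem A g) (hgf : SubIdem A g f)
    (hne : g ≠ f) : f ∉ subCorner A g g := by
  intro hmem
  rw [mem_subCorner] at hmem
  apply hne
  calc g = (g * f) * g := by rw [hgf.1, hg]
    _ = f := hmem

/-- Primitive decomposition of an idempotent with finite-dimensional corner. -/
lemma primdec (n : ℕ) : ∀ (f : A), IsIdem A f → ∀ (_ : FiniteDimensional ℂ (subCorner A f f)),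
    Module.finrank ℂ (subCorner A f f) ≤ n →
    ∃ L : List A, (∀ p ∈ L, IsPrimIdem A p) ∧ L.sum = f := by
  induction n with
  | zero =>
    intro f hf fd hr
    have h0 : subCorner A f f = ⊥ := by
      rw [← Submodule.finrank_eq_zero (R := ℂ)]
      omega
    have : f ∈ subCorner A f f := self_mem_corner hf
    rw [h0, Submodule.mem_bot] at this
    exact ⟨[], by simp, by simp [this]⟩
  | succ n ih =>
    intro f hf fd hr
    by_cases h0 : f = 0
    · exact ⟨[], by simp, by simp [h0]⟩
    by_cases hp : IsPrimIdem A f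
    · refine ⟨[f], ?_, by simp⟩
      intro p hp'
      simp only [List.mem_singleton] at hp'
      rwa [hp']
    have hex : ∃ g : A, IsIdem A g ∧ SubIdem A g f ∧ g ≠ 0 ∧ g ≠ f := by
      by_contra hcon
      push_neg at hcon
      apply hp
      refine ⟨hf, h0, fun g hgi hgs => ?_⟩
      by_cases hg0 : g = 0
      · exact Or.inl hg0
      · exact Or.inr (by by_contra hgf; exact hgf (hcon g hgi hgs hg0))
    obtain ⟨g, hgI, hgS, hg0, hgf⟩ := hex
    set g' : A := f - g with hg'def
    have hg'I : IsIdem A g' := by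
      have : (f - g) * (f - g) = f - g := by
        rw [sub_mul, mul_sub, mul_sub, hf, hgS.1, hgS.2, hgI]
        abel
      exact this
    have hg'S : SubIdem A g' f := by
      constructor
      · rw [sub_mul, hf, hgS.1]
      · rw [mul_sub, hf, hgS.2]
    have hg'0 : g' ≠ 0 := by
      intro h
      apply hgf
      rw [hg'def] at h
      have := sub_eq_zero.mp h
      exact this.symm
    have hg'f : g' ≠ f := by
      intro h
      apply hg0
      rw [hg'def] at h
      have : f - g - f = 0 := by rw [h, sub_self]
      calc g = -(f - g - f) := by abel
        _ = 0 := by rw [this, neg_zero]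
    -- finite dimensionality and rank bounds
    have hle : subCorner A g g ≤ subCorner A f f := corner_le_of_subIdem hgS
    have hle' : subCorner A g' g' ≤ subCorner A f f := corner_le_of_subIdem hg'S
    haveI fd1 : FiniteDimensional ℂ (subCorner A g g) := Submodule.finiteDimensional_of_le hle
    haveI fd2 : FiniteDimensional ℂ (subCorner A g' g') := Submodule.finiteDimensional_of_le hle'
    have hlt : subCorner A g g < subCorner A f f :=
      lt_of_le_of_ne hle (fun h => self_notMem_sub_corner hgI hgS hgf
        (h ▸ self_mem_corner hf))
    have hlt' : subCorner A g' g' < subCorner A f f :=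
      lt_of_le_of_ne hle' (fun h => self_notMem_sub_corner hg'I hg'S hg'f
        (h ▸ self_mem_corner hf))
    have hr1 : Module.finrank ℂ (subCorner A g g) ≤ n := by
      have := Submodule.finrank_lt_finrank_of_lt hlt
      omega
    have hr2 : Module.finrank ℂ (subCorner A g' g') ≤ n := by
      have := Submodule.finrank_lt_finrank_of_lt hlt'
      omega
    obtain ⟨L₁, hL₁, hL₁s⟩ := ih g hgI fd1 hr1
    obtain ⟨L₂, hL₂, hL₂s⟩ := ih g' hg'I fd2 hr2
    refine ⟨L₁ ++ L₂, ?_, ?_⟩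
    · intro p hp'
      rcases List.mem_append.mp hp' with h | h
      · exact hL₁ p h
      · exact hL₂ p h
    · rw [List.sum_append, hL₁s, hL₂s, hg'def]
      abel

lemma corner_piece_mem {a b : A} (ha : IsIdem A a) (hb : IsIdem A b) (x : A) :
    a * x * b ∈ subCorner A a b := by
  rw [mem_subCorner]
  calc a * (a * x * b) * b = (a * a) * x * (b * b) := by simp only [mul_assoc]
    _ = a * x * b := by rw [ha, hb]

lemma corner_facts {a b z : A} (ha : IsIdem A a) (hb : IsIdem A b) (h : a * z * b = z) :
    a * z = z ∧ z * b = z := by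
  constructor
  · calc a * z = a * (a * z * b) := by rw [h]
      _ = (a * a) * z * b := by simp only [mul_assoc]
      _ = z := by rw [ha, h]
  · calc z * b = (a * z * b) * b := by rw [h]
      _ = a * z * (b * b) := by simp only [mul_assoc]
      _ = z := by rw [hb, h]

lemma corner_zero_left {a b c z : A} (h : a * z * b = z) (hca : c * a = 0) : c * z = 0 := by
  calc c * z = c * (a * z * b) := by rw [h]
    _ = (c * a) * (z * b) := by simp only [mul_assoc]
    _ = 0 := by rw [hca, zero_mul]

lemma corner_zero_right {a b c z : A} (h : a * z * b = z) (hbc : b * c = 0) : z * c = 0 := by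
  calc z * c = (a * z * b) * c := by rw [h]
    _ = (a * z) * (b * c) := by simp only [mul_assoc]
    _ = 0 := by rw [hbc, mul_zero]

/-- Key lemma: an element of a finite-dimensional corner `fAf` that pairs to zero with
everything under `ψ` must vanish, provided `e` is generating and `ψ` is non-degenerate
on `eAe`. -/
lemma corner_N_zero {e : A} (hgen : IsGenIdem A e)
    {ψ : A →ₗ[ℂ] ℂ} (hψ : IsSLF A ψ)
    (hnd : ∀ x : A, e * x * e = x → (∀ y : A, e * y * e = y → ψ (x * y) = 0) → x = 0)
    {f : A} (hf : IsIdem A f) (fd : FiniteDimensional ℂ (subCorner A f f))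
    {z : A} (hzf : f * z * f = z) (hzN : ∀ y, ψ (z * y) = 0) : z = 0 := by
  obtain ⟨L, hL, hLs⟩ := primdec (Module.finrank ℂ (subCorner A f f)) f hf fd le_rfl
  by_contra hz0
  have hex : ∃ p ∈ L, ∃ q ∈ L, p * z * q ≠ 0 := by
    by_contra hcon
    push_neg at hcon
    apply hz0
    rw [← hzf, ← hLs]
    apply mul_list_sum_zero_s17
    intro q hq
    have h1 : L.sum * (z * q) = 0 := by
      apply list_sum_mul_zero_s17
      intro p hp
      rw [← mul_assoc]
      exact hcon p hp q hq
    rw [mul_assoc]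
    exact h1
  obtain ⟨p, hpL, q, hqL, hw⟩ := hex
  obtain ⟨hpI, hp0, -⟩ := hL p hpL
  obtain ⟨hqI, hq0, -⟩ := hL q hqL
  obtain ⟨heI, n, ε, hprim, horth, hesum, hcov⟩ := hgen
  obtain ⟨k, u, v, hu, hv, huv, hvu⟩ := hcov p (hL p hpL)
  obtain ⟨l, u', v', hu', hv', hu'v', hv'u'⟩ := hcov q (hL q hqL)
  have hεe : ∀ m, e * ε m = ε m := by
    intro m
    rw [hesum, Finset.sum_mul,
      Finset.sum_eq_single m (fun j _ hj => (horth j m hj).1) (by simp)]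
    exact (hprim m).1
  have heε : ∀ m, ε m * e = ε m := by
    intro m
    rw [hesum, Finset.mul_sum,
      Finset.sum_eq_single m (fun j _ hj => (horth m j (Ne.symm hj)).1) (by simp)]
    exact (hprim m).1
  have hev : e * v = v := by
    calc e * v = e * (ε k * v * p) := by rw [hv]
      _ = (e * ε k) * v * p := by simp only [mul_assoc]
      _ = v := by rw [hεe k, hv]
  have hu'e : u' * e = u' := by
    calc u' * e = (q * u' * ε l) * e := by rw [hu']
      _ = q * u' * (ε l * e) := by simp only [mul_assoc]
      _ = u' := by rw [heε l, hu']
  have hte : e * (v * (p * z * q) * u') * e = v * (p * z * q) * u' := by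
    calc e * (v * (p * z * q) * u') * e
        = (e * v) * ((p * z * q) * (u' * e)) := by simp only [mul_assoc]
      _ = v * ((p * z * q) * u') := by rw [hev, hu'e]
      _ = v * (p * z * q) * u' := by simp only [mul_assoc]
  have htN : ∀ y : A, e * y * e = y → ψ ((v * (p * z * q) * u') * y) = 0 := by
    intro y _
    calc ψ ((v * (p * z * q) * u') * y)
        = ψ (v * ((p * z * q) * (u' * y))) := by simp only [mul_assoc]
      _ = ψ (((p * z * q) * (u' * y)) * v) := hψ _ _
      _ = ψ (p * (z * (q * (u' * (y * v))))) := by simp only [mul_assoc]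
      _ = ψ ((z * (q * (u' * (y * v)))) * p) := hψ _ _
      _ = ψ (z * (q * (u' * (y * (v * p))))) := by simp only [mul_assoc]
      _ = 0 := hzN _
  have ht0 : v * (p * z * q) * u' = 0 := hnd _ hte htN
  apply hw
  have hkey : u * (v * (p * z * q) * u') * v' = p * z * q := by
    calc u * (v * (p * z * q) * u') * v'
        = (u * v) * ((p * z * q) * (u' * v')) := by simp only [mul_assoc]
      _ = p * ((p * z * q) * q) := by rw [huv, hu'v']
      _ = (p * p) * z * (q * q) := by simp only [mul_assoc]
      _ = p * z * q := by rw [hpI, hqI]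
  rw [← hkey, ht0, mul_zero, zero_mul]

end Aux

/-- Let `A` be AUF, `e` an idempotent, and `ψ` a symmetric linear functional
on `A`.  (i) If `ψ` is non-degenerate then `ψ|_{eAe}` is non-degenerate.  (ii) If `e` is
generating and `ψ|_{eAe}` is non-degenerate then `ψ` is non-degenerate. -/
theorem stmt_17 {A : Type u} [NonUnitalRing A] [Module ℂ A] [SMulCommClass ℂ A A]
    [IsScalarTower ℂ A A] (hA : IsAUF A) (e : A) (he : IsIdem A e)
    (ψ : A →ₗ[ℂ] ℂ) (hψ : IsSLF A ψ) :
    ((∀ x : A, (∀ y : A, ψ (x * y) = 0) → x = 0) →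
      (∀ x : A, e * x * e = x → (∀ y : A, e * y * e = y → ψ (x * y) = 0) → x = 0)) ∧
    (IsGenIdem A e →
      (∀ x : A, e * x * e = x → (∀ y : A, e * y * e = y → ψ (x * y) = 0) → x = 0) →
      (∀ x : A, (∀ y : A, ψ (x * y) = 0) → x = 0)) := by
  constructor
  · -- (i) non-degeneracy descends to the corner
    intro hnd x hxe hxy
    apply hnd
    intro y
    have h2 : e * (e * y * e) * e = e * y * e := by
      calc e * (e * y * e) * e = (e * e) * y * (e * e) := by simp only [mul_assoc]
        _ = e * y * e := by rw [he]
    calc ψ (x * y) = ψ ((e * x * e) * y) := by rw [hxe]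
      _ = ψ (e * (x * (e * y))) := by simp only [mul_assoc]
      _ = ψ ((x * (e * y)) * e) := hψ _ _
      _ = ψ (x * (e * y * e)) := by simp only [mul_assoc]
      _ = 0 := hxy (e * y * e) h2
  · -- (ii) non-degeneracy on the corner of a generating idempotent lifts to A
    intro hgen hnd x hx
    obtain ⟨I, E, hEidem, hEorth, hEfd, hEsup⟩ := hA
    have hmem : x ∈ ⨆ p : I × I, subCorner A (E p.1) (E p.2) := by
      have htop : (⨆ p : I × I, subCorner A (E p.1) (E p.2)) = ⊤ := by
        rw [iSup_prod]; exact hEsup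
      rw [htop]; trivial
    rw [Submodule.mem_iSup_iff_exists_finsupp] at hmem
    obtain ⟨F, hF, hFsum⟩ := hmem
    have hcF : ∀ q : I × I, E q.1 * F q * E q.2 = F q := fun q => hF q
    have hkey : ∀ p : I × I, F p = 0 := by
      intro p
      -- the corner piece of x at p is exactly F p
      have hFx : E p.1 * x * E p.2 = F p := by
        conv_lhs => rw [← hFsum]
        rw [Finsupp.sum, Finset.mul_sum, Finset.sum_mul,
          Finset.sum_eq_single p ?h1 ?h2]
        · exact hcF p
        case h1 =>
          intro q _ hqp
          have hq := hcF q
          have hne : ¬(q.1 = p.1 ∧ q.2 = p.2) := fun h => hqp (Prod.ext h.1 h.2)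
          rcases not_and_or.mp hne with h | h
          · have h0 : E p.1 * E q.1 = 0 := (hEorth p.1 q.1 (fun hh => h hh.symm)).1
            calc E p.1 * F q * E p.2
                = (E p.1 * E q.1) * (F q * (E q.2 * E p.2)) := by
                  conv_lhs => rw [← hq]
                  simp only [mul_assoc]
              _ = 0 := by rw [h0, zero_mul]
          · have h0 : E q.2 * E p.2 = 0 := (hEorth q.2 p.2 h).1
            calc E p.1 * F q * E p.2
                = E p.1 * (E q.1 * (F q * (E q.2 * E p.2))) := by
                  conv_lhs => rw [← hq]
                  simp only [mul_assoc]
              _ = 0 := by rw [h0, mul_zero, mul_zero, mul_zero]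
        case h2 =>
          intro hns
          rw [Finsupp.notMem_support_iff.mp hns, mul_zero, zero_mul]
      -- the piece pairs to zero with everything
      have hFN : ∀ y : A, ψ (F p * y) = 0 := by
        intro y
        rw [← hFx]
        calc ψ ((E p.1 * x * E p.2) * y)
            = ψ (E p.1 * (x * (E p.2 * y))) := by simp only [mul_assoc]
          _ = ψ ((x * (E p.2 * y)) * E p.1) := hψ _ _
          _ = ψ (x * (E p.2 * (y * E p.1))) := by simp only [mul_assoc]
          _ = 0 := hx _
      by_cases hab : p.1 = p.2
      · -- same corner
        have hzf : E p.1 * F p * E p.1 = F p := by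
          have := hcF p; rwa [← hab] at this
        exact corner_N_zero hgen hψ hnd (hEidem p.1) (hEfd p.1 p.1) hzf hFN
      · -- mixed corner: use the idempotent `E p.1 + E p.2`
        set a := p.1
        set b := p.2
        have o1 : E a * E b = 0 := (hEorth a b hab).1
        have o2 : E b * E a = 0 := (hEorth a b hab).2
        have hfI : IsIdem A (E a + E b) := by
          show (E a + E b) * (E a + E b) = E a + E b
          rw [mul_add, add_mul, add_mul, hEidem a, hEidem b, o1, o2]
          abel
        have hq := hcF p
        have hc1 := corner_facts (hEidem a) (hEidem b) hq
        have e1 : E a * F p = F p := hc1.1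
        have e2 : F p * E b = F p := hc1.2
        have e3 : E b * F p = 0 := corner_zero_left hq o2
        have e4 : F p * E a = 0 := corner_zero_right hq o2
        have hzf : (E a + E b) * F p * (E a + E b) = F p := by
          rw [mul_add, add_mul, add_mul, add_mul, e1, e3, e2, e4]
          simp
        have hle : subCorner A (E a + E b) (E a + E b) ≤
            (subCorner A (E a) (E a) ⊔ subCorner A (E a) (E b)) ⊔
            (subCorner A (E b) (E a) ⊔ subCorner A (E b) (E b)) := by
          intro y hy
          rw [mem_subCorner] at hy
          have hy4 : y = E a * y * E a + E a * y * E b + (E b * y * E a + E b * y * E b) := by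
            conv_lhs => rw [← hy]
            rw [mul_add, add_mul, add_mul, add_mul]
            abel
          rw [hy4]
          refine Submodule.add_mem _ (Submodule.add_mem _ ?_ ?_) (Submodule.add_mem _ ?_ ?_)
          · exact Submodule.mem_sup_left
              (Submodule.mem_sup_left (corner_piece_mem (hEidem a) (hEidem a) y))
          · exact Submodule.mem_sup_left
              (Submodule.mem_sup_right (corner_piece_mem (hEidem a) (hEidem b) y))
          · exact Submodule.mem_sup_right
              (Submodule.mem_sup_left (corner_piece_mem (hEidem b) (hEidem a) y))
          · exact Submodule.mem_sup_right
              (Submodule.mem_sup_right (corner_piece_mem (hEidem b) (hEidem b) y))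
        haveI := hEfd a a
        haveI := hEfd a b
        haveI := hEfd b a
        haveI := hEfd b b
        have fd : FiniteDimensional ℂ (subCorner A (E a + E b) (E a + E b)) :=
          Submodule.finiteDimensional_of_le hle
        exact corner_N_zero hgen hψ hnd hfI fd hzf hFN
    have hF0 : F = 0 := Finsupp.ext hkey
    rw [← hFsum, hF0, Finsupp.sum_zero_index]
end

section
/- Let A be an AUF algebra, witnessed by a family (e_i)_{i∈I} of pairwise orthogonal idempotents (so dim_ℂ e_i A e_j < ∞ for all i, j and every element of A is a finite sum of elements of the e_i A e_j), and let e ∈ A be a generating idempotent. Then the map sending a ∈ A to the left-multiplication operator L_a : Ae → Ae, L_a(x) = ax, is a ℂ-linear bijection from A onto the space of all ℂ-linear maps T : Ae → Ae such that T(xs) = T(x)s for all x ∈ Ae and s ∈ eAe, and such that T(e_i x) = 0 for all x ∈ Ae, for all but finitely many i ∈ I. -/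
open scoped BigOperators

universe u v

set_option linter.unusedSectionVars false

section Aux
variable {A : Type u} [NonUnitalRing A] [Module ℂ A] [SMulCommClass ℂ A A] [IsScalarTower ℂ A A]

lemma mem_subAe {e x : A} : x ∈ subAe A e ↔ x * e = x := Iff.rfl
lemma exists_rep {I : Type v} {E : I → A} (hE : IsAUFWitness A E) (b : A) :
    ∃ (s : Finset (I × I)) (c : I × I → A),
      (∀ p ∈ s, E p.1 * c p * E p.2 = c p) ∧ b = ∑ p ∈ s, c p := by
  have htop : (⨆ p : I × I, subCorner A (E p.1) (E p.2)) = ⊤ := by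
    rw [iSup_prod]; exact hE.2.2.2
  have hb : b ∈ ⨆ p : I × I, subCorner A (E p.1) (E p.2) := htop ▸ Submodule.mem_top
  rw [Submodule.mem_iSup_iff_exists_finsupp] at hb
  obtain ⟨f, hf, hsum⟩ := hb
  exact ⟨f.support, f, fun p _ => hf p, by rw [← hsum]; rfl⟩

lemma SubIdem.trans' {a b c : A} (h1 : SubIdem A a b) (h2 : SubIdem A b c) : SubIdem A a c :=
  ⟨by rw [← h1.1, mul_assoc, h2.1, h1.1], by rw [← h1.2, ← mul_assoc, h2.2, h1.2]⟩

lemma decomp : ∀ (N : ℕ) (f : A), IsIdem A f → FiniteDimensional ℂ (subCorner A f f) →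
    Module.finrank ℂ (subCorner A f f) ≤ N →
    ∃ (n : ℕ) (p : Fin n → A), (∀ k, IsPrimIdem A (p k)) ∧
      (∀ k l, k ≠ l → OrthIdem A (p k) (p l)) ∧ (∀ k, SubIdem A (p k) f) ∧ f = ∑ k, p k := by
  intro N
  induction N using Nat.strong_induction_on with
  | _ N IH =>
  intro f hf hfd hrank
  by_cases hf0 : f = 0
  · exact ⟨0, fun k => 0, fun k => k.elim0, fun k => k.elim0, fun k => k.elim0, by simp [hf0]⟩
  by_cases hprim : ∀ g : A, IsIdem A g → SubIdem A g f → g = 0 ∨ g = f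
  · exact ⟨1, fun _ => f, fun _ => ⟨hf, hf0, hprim⟩,
      fun k l h => absurd (Subsingleton.elim k l) h, fun _ => ⟨hf, hf⟩, by simp⟩
  push_neg at hprim
  obtain ⟨g, hg, hgf, hg0, hgff⟩ := hprim
  set h : A := f - g with hh
  have hgf1 : g * f = g := hgf.1
  have hgf2 : f * g = g := hgf.2
  have hgh : g * h = 0 := by rw [hh, mul_sub, hgf1, hg, sub_self]
  have hhg : h * g = 0 := by rw [hh, sub_mul, hgf2, hg, sub_self]
  have hhidem : IsIdem A h := by
    show h * h = h
    rw [hh, mul_sub, sub_mul, sub_mul, hf, hgf1, hgf2, hg]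
    abel
  have hhf : SubIdem A h f := by
    constructor
    · rw [hh, sub_mul, hf, hgf1]
    · rw [hh, mul_sub, hf, hgf2]
  have hne0 : h ≠ 0 := sub_ne_zero.mpr (Ne.symm hgff)
  -- corner inclusions
  have hle : ∀ (g' : A), SubIdem A g' f → subCorner A g' g' ≤ subCorner A f f := by
    intro g' hg' x hx
    rw [mem_subCorner] at hx ⊢
    calc f * x * f = f * (g' * x * g') * f := by rw [hx]
      _ = (f * g') * x * (g' * f) := by simp only [mul_assoc]
      _ = g' * x * g' := by rw [hg'.2, hg'.1]
      _ = x := hx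
  have hlt : ∀ (g' h' : A), SubIdem A g' f → h' ∈ subCorner A f f → g' * h' * g' = 0 →
      h' ≠ 0 → subCorner A g' g' < subCorner A f f := by
    intro g' h' hsub hmem hzero hne
    refine lt_of_le_of_ne (hle g' hsub) fun heq => ?_
    have : h' ∈ subCorner A g' g' := heq ▸ hmem
    rw [mem_subCorner] at this
    exact hne (by rw [← this, hzero])
  have hmemg : g ∈ subCorner A f f := by rw [mem_subCorner, hgf2, hgf1]
  have hmemh : h ∈ subCorner A f f := by
    rw [mem_subCorner, hhf.2, hhf.1]
  have hgzero : g * h * g = 0 := by rw [hgh, zero_mul]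
  have hhzero : h * g * h = 0 := by rw [hhg, zero_mul]
  have hltg : subCorner A g g < subCorner A f f := hlt g h hgf hmemh (by rw [hgh, zero_mul]) hne0
  have hlth : subCorner A h h < subCorner A f f := hlt h g hhf hmemg (by rw [hhg, zero_mul]) hg0
  haveI := hfd
  haveI : FiniteDimensional ℂ (subCorner A g g) := Submodule.finiteDimensional_of_le hltg.le
  haveI : FiniteDimensional ℂ (subCorner A h h) := Submodule.finiteDimensional_of_le hlth.le
  have hrg : Module.finrank ℂ (subCorner A g g) < N :=
    lt_of_lt_of_le (Submodule.finrank_lt_finrank_of_lt hltg) hrank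
  have hrh : Module.finrank ℂ (subCorner A h h) < N :=
    lt_of_lt_of_le (Submodule.finrank_lt_finrank_of_lt hlth) hrank
  obtain ⟨n1, p, hp, hpo, hpg, hpsum⟩ := IH _ hrg g hg inferInstance le_rfl
  obtain ⟨n2, q, hq, hqo, hqh, hqsum⟩ := IH _ hrh h hhidem inferInstance le_rfl
  refine ⟨n1 + n2, Fin.append p q, ?_, ?_, ?_, ?_⟩
  · intro k
    refine Fin.addCases (fun i => ?_) (fun i => ?_) k
    · rw [Fin.append_left]; exact hp i
    · rw [Fin.append_right]; exact hq i
  · -- pairwise orthogonality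
    have cross : ∀ (i : Fin n1) (j : Fin n2), OrthIdem A (p i) (q j) := by
      intro i j
      constructor
      · calc p i * q j = (p i * g) * (h * q j) := by rw [(hpg i).1, (hqh j).2]
          _ = p i * (g * h) * q j := by rw [mul_assoc, ← mul_assoc g, ← mul_assoc]
          _ = 0 := by rw [hgh, mul_zero, zero_mul]
      · calc q j * p i = (q j * h) * (g * p i) := by rw [(hqh j).1, (hpg i).2]
          _ = q j * (h * g) * p i := by rw [mul_assoc, ← mul_assoc h, ← mul_assoc]
          _ = 0 := by rw [hhg, mul_zero, zero_mul]
    have key : ∀ x : Fin (n1 + n2), (∃ i, x = Fin.castAdd n2 i) ∨ ∃ i, x = Fin.natAdd n1 i :=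
      fun x => Fin.addCases (fun i => Or.inl ⟨i, rfl⟩) (fun i => Or.inr ⟨i, rfl⟩) x
    intro k l hkl
    rcases key k with ⟨i, rfl⟩ | ⟨i, rfl⟩ <;> rcases key l with ⟨j, rfl⟩ | ⟨j, rfl⟩
    · rw [Fin.append_left, Fin.append_left]
      exact hpo i j fun hij => hkl (by rw [hij])
    · rw [Fin.append_left, Fin.append_right]; exact cross i j
    · rw [Fin.append_right, Fin.append_left]
      exact ⟨(cross j i).2, (cross j i).1⟩
    · rw [Fin.append_right, Fin.append_right]
      exact hqo i j fun hij => hkl (by rw [hij])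
  · intro k
    refine Fin.addCases (fun i => ?_) (fun i => ?_) k
    · rw [Fin.append_left]; exact SubIdem.trans' (hpg i) hgf
    · rw [Fin.append_right]; exact SubIdem.trans' (hqh i) hhf
  · rw [Fin.sum_univ_add]
    simp only [Fin.append_left, Fin.append_right]
    rw [← hpsum, ← hqsum, hh]
    abel

end Aux

section Aux2
variable {A : Type u} [NonUnitalRing A] [Module ℂ A] [SMulCommClass ℂ A A] [IsScalarTower ℂ A A]

lemma equiv_to_e {e : A} (hgen : IsGenIdem A e) {p : A} (hp : IsPrimIdem A p) :
    ∃ u v : A, u * e = u ∧ e * v = v ∧ v * p = v ∧ u * v = p := by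
  obtain ⟨he, n, ε, hprim, horth, hesum, hgen'⟩ := hgen
  obtain ⟨k, u, v, hu, hv, huv, hvu⟩ := hgen' p hp
  have hεe : ε k * e = ε k := by
    rw [hesum, Finset.mul_sum]
    rw [Finset.sum_eq_single k (fun l _ hl => (horth k l (Ne.symm hl)).1)
      (fun h => absurd (Finset.mem_univ k) h)]
    exact (hprim k).1
  have heε : e * ε k = ε k := by
    rw [hesum, Finset.sum_mul]
    rw [Finset.sum_eq_single k (fun l _ hl => (horth l k hl).1)
      (fun h => absurd (Finset.mem_univ k) h)]
    exact (hprim k).1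
  refine ⟨u, v, ?_, ?_, ?_, huv⟩
  · rw [← hu, mul_assoc (p * u) (ε k) e, hεe]
  · rw [← hv, ← mul_assoc, ← mul_assoc, heε]
  · rw [← hv, mul_assoc (ε k * v) p p, hp.1]

/-- Decomposition of each `E j` into primitive idempotents of `A`. -/
lemma decompE {I : Type v} {E : I → A} (hE : IsAUFWitness A E) (j : I) :
    ∃ (n : ℕ) (p : Fin n → A), (∀ k, IsPrimIdem A (p k)) ∧
      (∀ k l, k ≠ l → OrthIdem A (p k) (p l)) ∧ (∀ k, SubIdem A (p k) (E j)) ∧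
      E j = ∑ k, p k :=
  decomp _ (E j) (hE.1 j) (hE.2.2.1 j j) le_rfl

lemma ann_zero {I : Type v} {E : I → A} (hE : IsAUFWitness A E) {e : A}
    (hgen : IsGenIdem A e) (b : A) (hb : ∀ x : A, x * e = x → b * x = 0) : b = 0 := by
  classical
  have hEb : ∀ j, b * E j = 0 := by
    intro j
    obtain ⟨n, p, hprim, -, -, hsum⟩ := decompE hE j
    rw [hsum, Finset.mul_sum]
    refine Finset.sum_eq_zero fun k _ => ?_
    obtain ⟨u, v, hu, -, -, huv⟩ := equiv_to_e hgen (hprim k)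
    rw [← huv, ← mul_assoc, hb u hu, zero_mul]
  obtain ⟨s, c, hc, hrep⟩ := exists_rep hE b
  have hcE : ∀ p ∈ s, ∀ j, c p * E j = if p.2 = j then c p else 0 := by
    intro p hp j
    split_ifs with hj
    · subst hj
      conv_lhs => rw [← hc p hp]
      rw [mul_assoc, mul_assoc, hE.1 p.2]
      conv_rhs => rw [← hc p hp, mul_assoc]
    · conv_lhs => rw [← hc p hp]
      rw [mul_assoc, mul_assoc, (hE.2.1 p.2 j hj).1, mul_zero, mul_zero]
  calc b = ∑ p ∈ s, c p := hrep
    _ = ∑ p ∈ s, ∑ j ∈ s.image Prod.snd, if p.2 = j then c p else 0 := by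
        refine Finset.sum_congr rfl fun p hp => ?_
        rw [Finset.sum_ite_eq (s.image Prod.snd) p.2 (fun _ => c p),
          if_pos (Finset.mem_image_of_mem Prod.snd hp)]
    _ = ∑ j ∈ s.image Prod.snd, ∑ p ∈ s, if p.2 = j then c p else 0 := Finset.sum_comm
    _ = ∑ j ∈ s.image Prod.snd, b * E j := by
        refine Finset.sum_congr rfl fun j _ => ?_
        rw [hrep, Finset.sum_mul]
        exact Finset.sum_congr rfl fun p hp => (hcE p hp j).symm
    _ = 0 := by simp [hEb]

lemma left_decomp {I : Type v} {E : I → A} (hE : IsAUFWitness A E) (x : A) :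
    ∃ S : Finset I, (∑ i ∈ S, E i * x) = x ∧ ∀ i ∉ S, E i * x = 0 := by
  classical
  obtain ⟨s, c, hc, hrep⟩ := exists_rep hE x
  have hEc : ∀ p ∈ s, ∀ i, E i * c p = if p.1 = i then c p else 0 := by
    intro p hp i
    split_ifs with hi
    · subst hi
      conv_lhs => rw [← hc p hp, ← mul_assoc, ← mul_assoc, hE.1 p.1]
      exact hc p hp
    · conv_lhs => rw [← hc p hp, ← mul_assoc, ← mul_assoc,
        (hE.2.1 i p.1 (fun h => hi h.symm)).1, zero_mul, zero_mul]
  have hEx : ∀ i, E i * x = ∑ p ∈ s, if p.1 = i then c p else 0 := by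
    intro i
    rw [hrep, Finset.mul_sum]
    exact Finset.sum_congr rfl fun p hp => hEc p hp i
  refine ⟨s.image Prod.fst, ?_, ?_⟩
  · calc ∑ i ∈ s.image Prod.fst, E i * x
        = ∑ i ∈ s.image Prod.fst, ∑ p ∈ s, if p.1 = i then c p else 0 :=
          Finset.sum_congr rfl fun i _ => hEx i
      _ = ∑ p ∈ s, ∑ i ∈ s.image Prod.fst, if p.1 = i then c p else 0 := Finset.sum_comm
      _ = ∑ p ∈ s, c p := by
          refine Finset.sum_congr rfl fun p hp => ?_
          rw [Finset.sum_ite_eq (s.image Prod.fst) p.1 (fun _ => c p),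
            if_pos (Finset.mem_image_of_mem Prod.fst hp)]
      _ = x := hrep.symm
  · intro i hi
    rw [hEx i]
    refine Finset.sum_eq_zero fun p hp => ?_
    rw [if_neg fun h => hi (by rw [← h]; exact Finset.mem_image_of_mem Prod.fst hp)]

lemma right_ann {I : Type v} {E : I → A} (hE : IsAUFWitness A E) (a : A) :
    ∃ S : Finset I, ∀ i ∉ S, a * E i = 0 := by
  classical
  obtain ⟨s, c, hc, hrep⟩ := exists_rep hE a
  refine ⟨s.image Prod.snd, fun i hi => ?_⟩
  rw [hrep, Finset.sum_mul]
  refine Finset.sum_eq_zero fun p hp => ?_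
  conv_lhs => rw [← hc p hp]
  rw [mul_assoc, mul_assoc,
    (hE.2.1 p.2 i (fun h => hi (by rw [← h]; exact Finset.mem_image_of_mem Prod.snd hp))).1,
    mul_zero, mul_zero]

end Aux2
/-- Let `A` be AUF, witnessed by the orthogonal idempotent family `E`, and let
`e` be a generating idempotent.  Then `a ↦ L_a` is a ℂ-linear bijection from `A` onto the
space of ℂ-linear maps `T : Ae → Ae` that are right `eAe`-linear and kill `E i · Ae` for all
but finitely many `i`. -/
theorem stmt_18 {A : Type u} [NonUnitalRing A] [Module ℂ A] [SMulCommClass ℂ A A]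
    [IsScalarTower ℂ A A] {I : Type v} (E : I → A) (hE : IsAUFWitness A E)
    (e : A) (hgen : IsGenIdem A e) :
    -- each L_a is a well-defined member of the space: it preserves Ae, is right
    -- eAe-linear, and vanishes on E i · Ae for all but finitely many i
    (∀ a : A,
      (∀ x ∈ subAe A e, a * x ∈ subAe A e) ∧
      (∀ (x s : A), x ∈ subAe A e → s ∈ subCorner A e e → a * (x * s) = (a * x) * s) ∧
      {i | ∃ x ∈ subAe A e, a * (E i * x) ≠ 0}.Finite) ∧
    -- a ↦ L_a is ℂ-linear
    (∀ (c : ℂ) (a a' x : A), (c • a + a') * x = c • (a * x) + a' * x) ∧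
    -- injectivity
    (∀ a a' : A, (∀ x ∈ subAe A e, a * x = a' * x) → a = a') ∧
    -- surjectivity
    (∀ T : ↥(subAe A e) →ₗ[ℂ] ↥(subAe A e),
      (∀ (x s : A) (hx : x ∈ subAe A e) (hs : s ∈ subCorner A e e)
        (hxs : x * s ∈ subAe A e),
        (T ⟨x * s, hxs⟩ : A) = (T ⟨x, hx⟩ : A) * s) →
      {i | ¬ ∀ (x : A) (hx : x ∈ subAe A e) (hex : E i * x ∈ subAe A e),
        T ⟨E i * x, hex⟩ = 0}.Finite →
      ∃ a : A, ∀ (x : A) (hx : x ∈ subAe A e), (T ⟨x, hx⟩ : A) = a * x) := by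

  classical
  have he' : IsIdem A e := hgen.1
  refine ⟨?_, ?_, ?_, ?_⟩
  · -- Part 1: well-definedness
    intro a
    refine ⟨fun x hx => ?_, fun x s _ _ => ?_, ?_⟩
    · rw [mem_subAe] at hx ⊢; rw [mul_assoc, hx]
    · rw [mul_assoc]
    · obtain ⟨S, hS⟩ := right_ann hE a
      refine Set.Finite.subset S.finite_toSet fun i hi => ?_
      by_contra hiS
      obtain ⟨x, -, hax⟩ := hi
      exact hax (by rw [← mul_assoc, hS i hiS, zero_mul])
  · -- Part 2: linearity
    intro c a a' x
    rw [add_mul, smul_mul_assoc]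
  · -- Part 3: injectivity
    intro a a' hmul
    have h0 : a - a' = 0 :=
      ann_zero hE hgen (a - a') fun x hx => by rw [sub_mul, hmul x hx, sub_self]
    exact sub_eq_zero.mp h0
  · -- Part 4: surjectivity
    intro T hT hfin
    choose n p hprim horth hsub hsum using fun i : I => decompE hE i
    choose u v hue hev hvp huv using fun (i : I) (k : Fin (n i)) =>
      equiv_to_e hgen (hprim i k)
    have humem : ∀ i k, u i k ∈ subAe A e := fun i k => hue i k
    refine ⟨∑ i ∈ hfin.toFinset, ∑ k, (T ⟨u i k, humem i k⟩ : A) * v i k, ?_⟩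
    intro x hx
    have hxe : x * e = x := hx
    have hmemE : ∀ (i : I) (z : A), z ∈ subAe A e → E i * z ∈ subAe A e := by
      intro i z hz
      rw [mem_subAe] at hz ⊢; rw [mul_assoc, hz]
    -- key computation for each i
    have key : ∀ (i : I) (z : A) (hz : z ∈ subAe A e),
        (T ⟨E i * z, hmemE i z hz⟩ : A)
          = ∑ k, (T ⟨u i k, humem i k⟩ : A) * (v i k * z) := by
      intro i z hz
      have hze : z * e = z := hz
      have hy : (E i * z) * e = E i * z := hmemE i z hz
      have hysum : E i * z = ∑ k, p i k * (E i * z) := by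
        have h1 : E i * z = (∑ k, p i k) * (E i * z) := by
          rw [← hsum i, ← mul_assoc, hE.1 i]
        exact h1.trans (Finset.sum_mul _ _ _)
      have hmempy : ∀ k, p i k * (E i * z) ∈ subAe A e := by
        intro k
        rw [mem_subAe, mul_assoc, hy]
      have hveq : ∀ k, v i k * (E i * z) = v i k * z := by
        intro k
        have hvE : v i k * E i = v i k := by
          conv_lhs => rw [← hvp i k, mul_assoc, (hsub i k).1]
          exact hvp i k
        rw [← mul_assoc, hvE]
      have hsubeq : (⟨E i * z, hmemE i z hz⟩ : subAe A e)
          = ∑ k, ⟨p i k * (E i * z), hmempy k⟩ := by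
        apply Subtype.ext
        rw [AddSubmonoidClass.coe_finset_sum]
        exact hysum
      rw [hsubeq, map_sum, AddSubmonoidClass.coe_finset_sum]
      refine Finset.sum_congr rfl fun k _ => ?_
      have hcorner : v i k * (E i * z) ∈ subCorner A e e := by
        rw [mem_subCorner, ← mul_assoc, hev i k, mul_assoc, hy]
      have hprod : p i k * (E i * z) = u i k * (v i k * (E i * z)) := by
        rw [← mul_assoc (u i k) (v i k) (E i * z), huv i k]
      have hxs : u i k * (v i k * (E i * z)) ∈ subAe A e := hprod ▸ hmempy k
      have : (⟨p i k * (E i * z), hmempy k⟩ : subAe A e)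
          = ⟨u i k * (v i k * (E i * z)), hxs⟩ := Subtype.ext hprod
      rw [this, hT (u i k) (v i k * (E i * z)) (humem i k) hcorner hxs, hveq k]
    -- decomposition of x
    obtain ⟨S, hSsum, hSzero⟩ := left_decomp hE x
    have hTx : (T ⟨x, hx⟩ : A) = ∑ i ∈ S, (T ⟨E i * x, hmemE i x hx⟩ : A) := by
      have : (⟨x, hx⟩ : subAe A e) = ∑ i ∈ S, ⟨E i * x, hmemE i x hx⟩ := by
        apply Subtype.ext
        rw [AddSubmonoidClass.coe_finset_sum]
        exact hSsum.symm
      rw [this, map_sum, AddSubmonoidClass.coe_finset_sum]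
    have hax : (∑ i ∈ hfin.toFinset, ∑ k, (T ⟨u i k, humem i k⟩ : A) * v i k) * x
        = ∑ i ∈ hfin.toFinset, (T ⟨E i * x, hmemE i x hx⟩ : A) := by
      rw [Finset.sum_mul]
      refine Finset.sum_congr rfl fun i _ => ?_
      rw [Finset.sum_mul, key i x hx]
      exact Finset.sum_congr rfl fun k _ => (mul_assoc _ _ _)
    rw [hTx, hax]
    -- bridge the two index sets
    refine (Finset.sum_subset Finset.subset_union_left ?_).trans
      (Finset.sum_subset Finset.subset_union_right ?_).symm
    · -- i ∈ S ∪ F, i ∉ S : E i * x = 0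
      intro i _ hiS
      have : (⟨E i * x, hmemE i x hx⟩ : subAe A e) = 0 := Subtype.ext (hSzero i hiS)
      rw [this, map_zero, ZeroMemClass.coe_zero]
    · -- i ∈ S ∪ F, i ∉ F : T kills E i * Ae
      intro i _ hiF
      have hP := not_not.mp (fun hnP => hiF (hfin.mem_toFinset.mpr hnP))
      rw [hP x hx (hmemE i x hx), ZeroMemClass.coe_zero]
end
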